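/- Suppose the tensor complementarity problem TCP(A,·) has the GUS-property, i.e., for every a ∈ ℝ^n the set Sol(A,a) contains exactly one element s(a). Then the map s : ℝ^n → ℝ^n assigning to each a the unique solution of TCP(A,a) is continuous on ℝ^n. -/
import Mathlib


open Finset MeasureTheory Pointwise

/-- For a tensor `A` of order `k+1` and dimension `n` (entries `A i j` = `a_{i, j 0, …, j (k-1)}`),
`tApply A x` is the vector `A x^{k}` with `i`-th component
`∑_{i_2,…,i_{k+1}} a_{i i_2 ⋯ i_{k+1}} x_{i_2} ⋯ x_{i_{k+1}}`. -/
noncomputable def tApply {n k : ℕ} (A : Fin n → (Fin k → Fin n) → ℝ) (x : Fin n → ℝ) :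
    Fin n → ℝ :=
  fun i => ∑ j : Fin k → Fin n, A i j * ∏ l : Fin k, x (j l)

/-- The solution set of the tensor complementarity problem `TCP(A,a)`. -/
def Sol {n k : ℕ} (A : Fin n → (Fin k → Fin n) → ℝ) (a : Fin n → ℝ) : Set (Fin n → ℝ) :=
  {x | (∀ i, 0 ≤ x i) ∧ (∀ i, 0 ≤ tApply A x i + a i) ∧ ∑ i, x i * (tApply A x i + a i) = 0}

/-- `A` is an R₀-tensor if `Sol(A,0) = {0}`. -/
def IsR0 {n k : ℕ} (A : Fin n → (Fin k → Fin n) → ℝ) : Prop := Sol A 0 = {0}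

/-- Frobenius norm of a tensor. -/
noncomputable def tNorm {n k : ℕ} (A : Fin n → (Fin k → Fin n) → ℝ) : ℝ :=
  Real.sqrt (∑ i, ∑ j, (A i j) ^ 2)

/-- Euclidean norm of a vector in ℝⁿ. -/
noncomputable def eNorm {n : ℕ} (x : Fin n → ℝ) : ℝ := Real.sqrt (∑ i, (x i) ^ 2)

private lemma tApply_cont' {n k : ℕ} (A : Fin n → (Fin k → Fin n) → ℝ) :
    Continuous (tApply A) := by
  unfold tApply
  exact continuous_pi fun i => continuous_finset_sum _ fun j _ =>
    continuous_const.mul (continuous_finset_prod _ fun l _ => continuous_apply _)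

private lemma tApply_smul' {n k : ℕ} (A : Fin n → (Fin k → Fin n) → ℝ) (c : ℝ) (x : Fin n → ℝ)
    (i : Fin n) : tApply A (c • x) i = c ^ k * tApply A x i := by
  unfold tApply
  rw [Finset.mul_sum]
  refine Finset.sum_congr rfl fun j _ => ?_
  have : ∏ l : Fin k, (c • x) (j l) = c ^ k * ∏ l : Fin k, x (j l) := by
    simp [Finset.prod_mul_distrib]
  rw [this]; ring

open Filter in
private lemma sol_closed' {n k : ℕ} (A : Fin n → (Fin k → Fin n) → ℝ)
    {b x : ℕ → Fin n → ℝ} {b₀ x₀ : Fin n → ℝ}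
    (hb : Tendsto b atTop (nhds b₀)) (hx : Tendsto x atTop (nhds x₀))
    (h : ∀ l, x l ∈ Sol A (b l)) : x₀ ∈ Sol A b₀ := by
  have htA : Tendsto (fun l => tApply A (x l)) atTop (nhds (tApply A x₀)) :=
    ((tApply_cont' A).tendsto _).comp hx
  have hxi : ∀ i, Tendsto (fun l => x l i) atTop (nhds (x₀ i)) :=
    fun i => tendsto_pi_nhds.mp hx i
  have hbi : ∀ i, Tendsto (fun l => b l i) atTop (nhds (b₀ i)) :=
    fun i => tendsto_pi_nhds.mp hb i
  have hAi : ∀ i, Tendsto (fun l => tApply A (x l) i) atTop (nhds (tApply A x₀ i)) :=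
    fun i => tendsto_pi_nhds.mp htA i
  refine ⟨fun i => ge_of_tendsto' (hxi i) (fun l => (h l).1 i),
    fun i => ge_of_tendsto' ((hAi i).add (hbi i)) (fun l => (h l).2.1 i), ?_⟩
  have hsum : Tendsto (fun l => ∑ i, x l i * (tApply A (x l) i + b l i)) atTop
      (nhds (∑ i, x₀ i * (tApply A x₀ i + b₀ i))) :=
    tendsto_finset_sum _ fun i _ => (hxi i).mul ((hAi i).add (hbi i))
  have heq : (fun l => ∑ i, x l i * (tApply A (x l) i + b l i)) = fun _ => (0:ℝ) :=
    funext fun l => (h l).2.2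
  rw [heq] at hsum
  exact tendsto_nhds_unique hsum tendsto_const_nhds

open Filter in
/-- Scaling a solution of `TCP(A,b)` by `c > 0` gives a solution of `TCP(A, c^k • b)`. -/
private lemma sol_scale' {n k : ℕ} (A : Fin n → (Fin k → Fin n) → ℝ) {b : Fin n → ℝ}
    {x : Fin n → ℝ} (hx : x ∈ Sol A b) {c : ℝ} (hc : 0 < c) :
    c • x ∈ Sol A (c ^ k • b) := by
  obtain ⟨h1, h2, h3⟩ := hx
  have hck : (0:ℝ) < c ^ k := pow_pos hc k
  refine ⟨fun i => ?_, fun i => ?_, ?_⟩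
  · exact mul_nonneg hc.le (h1 i)
  · have : tApply A (c • x) i + (c ^ k • b) i = c ^ k * (tApply A x i + b i) := by
      rw [tApply_smul']; simp [mul_add]
    rw [this]
    exact mul_nonneg hck.le (h2 i)
  · have : ∀ i, (c • x) i * (tApply A (c • x) i + (c ^ k • b) i)
        = c ^ (k+1) * (x i * (tApply A x i + b i)) := by
      intro i
      rw [tApply_smul']
      simp only [Pi.smul_apply, smul_eq_mul]
      ring
    rw [Finset.sum_congr rfl fun i _ => this i, ← Finset.mul_sum, h3, mul_zero]

/-- if `TCP(A,·)` has the GUS-property, then the single-valued solution map is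
continuous on ℝⁿ. -/
theorem stmt_14 (m n : ℕ) (hm : 2 ≤ m) (hn : 2 ≤ n) (A : Fin n → (Fin (m - 1) → Fin n) → ℝ)
    (s : (Fin n → ℝ) → (Fin n → ℝ)) (hGUS : ∀ a : Fin n → ℝ, Sol A a = {s a}) :
    Continuous s := by
  classical
  have hk1 : 1 ≤ m - 1 := by omega
  have hsol : ∀ a, s a ∈ Sol A a := fun a => by rw [hGUS a]; rfl
  have hUniq : ∀ a x, x ∈ Sol A a → x = s a := fun a x hx => by rw [hGUS a] at hx; exact hx
  -- 0 solves TCP(A,0)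
  have hz : tApply A (0 : Fin n → ℝ) = 0 := by
    funext i
    unfold tApply
    have hp : ∀ j : Fin (m-1) → Fin n, (∏ l : Fin (m-1), (0 : Fin n → ℝ) (j l)) = 0 := fun j =>
      Finset.prod_eq_zero (Finset.mem_univ (⟨0, hk1⟩ : Fin (m-1))) rfl
    simp [hp, zero_pow (by omega : m - 1 ≠ 0)]
  have h0 : (0 : Fin n → ℝ) ∈ Sol A 0 := by
    refine ⟨fun i => le_refl 0, ?_, ?_⟩ <;> simp [hz]
  have hs0 : s 0 = 0 := (hUniq 0 0 h0).symm
  -- Blow-up lemma: solutions over a bounded sequence of data cannot blow up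
  have key : ∀ (b : ℕ → Fin n → ℝ) (C : ℝ), (∀ l, ‖b l‖ ≤ C) →
      (∀ l : ℕ, (l : ℝ) + 1 ≤ ‖s (b l)‖) → False := by
    intro b C hC hbig
    set x : ℕ → Fin n → ℝ := fun l => s (b l) with hxdef
    have hr1 : ∀ l, (1 : ℝ) ≤ ‖x l‖ := fun l => by
      have h1 := hbig l
      have h2 : (0:ℝ) ≤ (l:ℝ) := Nat.cast_nonneg l
      linarith
    have hrpos : ∀ l, (0 : ℝ) < ‖x l‖ := fun l => lt_of_lt_of_le one_pos (hr1 l)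
    set t : ℕ → Fin n → ℝ := fun l => (‖x l‖)⁻¹ • x l with htdef
    have ht1 : ∀ l, t l ∈ Metric.sphere (0 : Fin n → ℝ) 1 := by
      intro l
      rw [mem_sphere_zero_iff_norm, norm_smul, norm_inv, norm_norm,
        inv_mul_cancel₀ (hrpos l).ne']
    obtain ⟨t₀, ht₀, ψ, hψ, htends⟩ :=
      (isCompact_sphere (0 : Fin n → ℝ) 1).tendsto_subseq ht1
    -- t l solves TCP(A, c l) with c l = ‖x l‖⁻¹ ^ (m-1) • b l
    set c : ℕ → Fin n → ℝ := fun l => ((‖x l‖)⁻¹ ^ (m-1)) • b l with hcdef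
    have htc : ∀ l, t l ∈ Sol A (c l) := fun l =>
      sol_scale' A (hsol (b l)) (inv_pos.mpr (hrpos l))
    -- c ∘ ψ → 0
    have hcz : Filter.Tendsto (fun l => c (ψ l)) Filter.atTop (nhds 0) := by
      rw [tendsto_zero_iff_norm_tendsto_zero]
      have hb0 : ∀ l, ‖c l‖ ≤ C * ((l:ℝ)+1)⁻¹ := by
        intro l
        have hinv1 : (‖x l‖)⁻¹ ≤ 1 := inv_le_one_of_one_le₀ (hr1 l)
        have hinv0 : (0:ℝ) ≤ (‖x l‖)⁻¹ := inv_nonneg.mpr (norm_nonneg _)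
        have hpow : (‖x l‖)⁻¹ ^ (m-1) ≤ (‖x l‖)⁻¹ := by
          calc (‖x l‖)⁻¹ ^ (m-1) ≤ (‖x l‖)⁻¹ ^ 1 :=
                pow_le_pow_of_le_one hinv0 hinv1 hk1
            _ = (‖x l‖)⁻¹ := pow_one _
        have hinvle : (‖x l‖)⁻¹ ≤ ((l:ℝ)+1)⁻¹ := by
          apply inv_anti₀
          · positivity
          · exact hbig l
        have hC0 : 0 ≤ C := le_trans (norm_nonneg _) (hC 0)
        calc ‖c l‖ = (‖x l‖)⁻¹ ^ (m-1) * ‖b l‖ := by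
              rw [hcdef]
              simp only [norm_smul, Real.norm_eq_abs]
              rw [abs_of_nonneg (pow_nonneg hinv0 _)]
          _ ≤ ((l:ℝ)+1)⁻¹ * C := by
              apply mul_le_mul (le_trans hpow hinvle) (hC l) (norm_nonneg _) (by positivity)
          _ = C * ((l:ℝ)+1)⁻¹ := mul_comm _ _
      have h2 : Filter.Tendsto (fun l : ℕ => C * ((l:ℝ)+1)⁻¹) Filter.atTop (nhds 0) := by
        rw [show (0:ℝ) = C * 0 by ring]
        exact Filter.Tendsto.const_mul C (tendsto_inv_atTop_zero.comp
          (Filter.tendsto_atTop_add_const_right _ 1 tendsto_natCast_atTop_atTop))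
      have hsq : Filter.Tendsto (fun l => ‖c l‖) Filter.atTop (nhds 0) :=
        squeeze_zero (fun l => norm_nonneg _) hb0 h2
      exact hsq.comp hψ.tendsto_atTop
    have ht₀sol : t₀ ∈ Sol A 0 := sol_closed' A hcz htends (fun l => htc (ψ l))
    have : t₀ = 0 := by rw [hUniq 0 t₀ ht₀sol, hs0]
    rw [mem_sphere_zero_iff_norm, this, norm_zero] at ht₀
    exact one_ne_zero ht₀.symm
  -- continuity via sequential continuity
  rw [continuous_iff_seqContinuous]
  intro a a₀ ha
  -- s ∘ a is bounded
  obtain ⟨C, hCmem⟩ := ha.norm.bddAbove_range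
  have hC : ∀ j, ‖a j‖ ≤ C := fun j => hCmem ⟨j, rfl⟩
  have hbdd : ∃ R, ∀ j, ‖s (a j)‖ ≤ R := by
    by_contra h
    push_neg at h
    choose jj hjj using fun l : ℕ => h ((l:ℝ)+1)
    exact key (fun l => a (jj l)) C (fun l => hC (jj l)) (fun l => (hjj l).le)
  obtain ⟨R, hR⟩ := hbdd
  apply Filter.tendsto_of_subseq_tendsto
  intro ns hns
  obtain ⟨y, hy, φ, hφ, hty⟩ := (isCompact_closedBall (0 : Fin n → ℝ) R).tendsto_subseq
    (x := fun l => s (a (ns l))) (fun l => Metric.mem_closedBall.mpr (by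
      simpa using hR (ns l)))
  refine ⟨φ, ?_⟩
  have hba : Filter.Tendsto (fun l => a (ns (φ l))) Filter.atTop (nhds a₀) :=
    ha.comp (hns.comp hφ.tendsto_atTop)
  have hysol : y ∈ Sol A a₀ :=
    sol_closed' A hba hty (fun l => hsol _)
  have : y = s a₀ := hUniq a₀ y hysol
  rw [this] at hty
  exact hty
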